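/- arXiv:2303.05822 — 2 statements merged into one kernel-verified Lean document; each statement's English description precedes it below -/
import Mathlib

section
/- There exists an absolute constant C such that for any reals N, v > 0 and any nonzero n ∈ ℤ[i] with N(n) ≤ N, the number of nonzero m ∈ ℤ[i] with N(m) ≤ N and 0 < |arg(m) − arg(n)| < v/N is at most C·v, where arg is taken modulo π/2. -/
open scoped Real

noncomputable section

/-- The norm `N(a+bi) = a² + b²` of a Gaussian integer, as a real number. -/
def gnorm (n : GaussianInt) : ℝ := (Zsqrtd.norm n : ℝ)

/-- The argument of a Gaussian integer, viewed as a complex number. -/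
def garg (n : GaussianInt) : ℝ := (GaussianInt.toComplex n).arg

/-- The set of nonzero Gaussian integers `m` with `N(m) ≤ N` whose argument differs from
that of `n` by a nonzero amount less than `v/N`, the argument being taken modulo `π/2`. -/
def sectorSet (N v : ℝ) (n : GaussianInt) : Set GaussianInt :=
  {m | m ≠ 0 ∧ gnorm m ≤ N ∧
    (∃ k : ℤ, |garg m - garg n - k * (π / 2)| < v / N) ∧
    ¬ ∃ k : ℤ, garg m - garg n = k * (π / 2)}

namespace SectorAux

lemma toComplex_im_eq (z : GaussianInt) : (GaussianInt.toComplex z).im = (z.im : ℝ) := by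
  rcases z with ⟨x, y⟩; simp [GaussianInt.toComplex_def]

open GaussianInt Complex in
lemma im_w_eq (m n : GaussianInt) (j : ℕ) :
    (((m * star n * (⟨0,1⟩ : GaussianInt) ^ j).im : ℝ)) =
      Real.sqrt (gnorm m) * Real.sqrt (gnorm n) *
        Real.sin (garg m - garg n + j * (π/2)) := by
  have hgm : (toComplex m).arg = garg m := rfl
  have hgn : (toComplex n).arg = garg n := rfl
  have habs : ∀ x : GaussianInt, (‖toComplex x‖ : ℂ) = (Real.sqrt (gnorm x) : ℂ) := by
    intro x
    rw [Complex.norm_def, gnorm]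
    norm_cast
    rw [GaussianInt.intCast_real_norm]
  have h1 : toComplex m = (Real.sqrt (gnorm m) : ℂ) * Complex.exp ((garg m : ℝ) * I) := by
    rw [← habs, ← hgm]; exact (norm_mul_exp_arg_mul_I _).symm
  have h2 : (starRingEnd ℂ) (toComplex n) = (Real.sqrt (gnorm n) : ℂ) *
      Complex.exp (((-garg n : ℝ) : ℂ) * I) := by
    conv_lhs => rw [← norm_mul_exp_arg_mul_I (toComplex n)]
    rw [map_mul, ← Complex.exp_conj, map_mul, Complex.conj_I, Complex.conj_ofReal,
      Complex.conj_ofReal, habs, hgn]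
    push_cast
    ring_nf
  have h3 : (toComplex (⟨0,1⟩ : GaussianInt)) = Complex.exp (((π/2 : ℝ) : ℂ) * I) := by
    rw [Complex.exp_mul_I]
    push_cast
    rw [Complex.cos_pi_div_two, Complex.sin_pi_div_two]
    simp [GaussianInt.toComplex_def]
  have hexp : Complex.exp ((garg m : ℝ) * I) * Complex.exp (((-garg n : ℝ) : ℂ) * I) *
      Complex.exp ((j : ℂ) * (((π/2 : ℝ) : ℂ) * I)) =
      Complex.exp (((garg m - garg n + j * (π/2) : ℝ) : ℂ) * I) := by
    rw [← Complex.exp_add, ← Complex.exp_add]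
    congr 1
    push_cast
    ring
  have key : toComplex (m * star n * (⟨0,1⟩ : GaussianInt) ^ j) =
      ((Real.sqrt (gnorm m) * Real.sqrt (gnorm n) : ℝ) : ℂ) *
        Complex.exp (((garg m - garg n + j * (π/2) : ℝ) : ℂ) * I) := by
    rw [map_mul, map_mul, map_pow, GaussianInt.toComplex_star, h1, h2, h3,
      ← Complex.exp_nat_mul, Complex.ofReal_mul, ← hexp]
    ring
  have h4 := congrArg Complex.im key
  rw [toComplex_im_eq] at h4
  rw [h4, Complex.mul_im, Complex.ofReal_re, Complex.ofReal_im,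
    Complex.exp_ofReal_mul_I_im, Complex.exp_ofReal_mul_I_re]
  ring

def gc (n : GaussianInt) : ℤ := Int.gcd n.re n.im

def Dd (n : GaussianInt) : ℤ := gc n * ((n.re / gc n)^2 + (n.im / gc n)^2)

lemma gc_pos {n : GaussianInt} (hn : n ≠ 0) : 0 < gc n := by
  have h : n.re ≠ 0 ∨ n.im ≠ 0 := by
    by_contra h
    push_neg at h
    exact hn (Zsqrtd.ext_iff.mpr ⟨by simpa using h.1, by simpa using h.2⟩)
  exact Int.natCast_pos.mpr (Int.gcd_pos_iff.mpr h)

lemma gc_dvd_re (n : GaussianInt) : gc n ∣ n.re := Int.gcd_dvd_left _ _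
lemma gc_dvd_im (n : GaussianInt) : gc n ∣ n.im := Int.gcd_dvd_right _ _

lemma gc_mul_Dd {n : GaussianInt} (hn : n ≠ 0) : gc n * Dd n = Zsqrtd.norm n := by
  obtain ⟨a', ha⟩ := gc_dvd_re n
  obtain ⟨b', hb⟩ := gc_dvd_im n
  have e1 : n.re / gc n = a' := by rw [ha]; exact Int.mul_ediv_cancel_left _ (gc_pos hn).ne'
  have e2 : n.im / gc n = b' := by rw [hb]; exact Int.mul_ediv_cancel_left _ (gc_pos hn).ne'
  rw [Dd, e1, e2, Zsqrtd.norm_def, ha, hb]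
  ring

lemma Dd_pos {n : GaussianInt} (hn : n ≠ 0) : 0 < Dd n := by
  have h := gc_mul_Dd hn
  have hnorm : 0 < Zsqrtd.norm n := GaussianInt.norm_pos.mpr hn
  nlinarith [gc_pos hn]

lemma coprime_red {n : GaussianInt} (hn : n ≠ 0) :
    IsCoprime (n.re / gc n) (n.im / gc n) := by
  rw [Int.isCoprime_iff_gcd_eq_one]
  exact Int.gcd_div_gcd_div_gcd (Int.natCast_pos.mp (gc_pos hn))

lemma dvd_re_of_im_eq_zero {n : GaussianInt} (hn : n ≠ 0) {u : GaussianInt}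
    (hu : star n ∣ u) (him : u.im = 0) : Dd n ∣ u.re := by
  obtain ⟨z, rfl⟩ := hu
  have hGpos := gc_pos hn
  set G := gc n with hG
  set a' := n.re / G with ha'
  set b' := n.im / G with hb'
  have ha : n.re = G * a' := (Int.ediv_mul_cancel (gc_dvd_re n)).symm.trans (mul_comm _ _)
  have hb : n.im = G * b' := (Int.ediv_mul_cancel (gc_dvd_im n)).symm.trans (mul_comm _ _)
  have hre : (star n * z).re = z.re * n.re + z.im * n.im := by
    rw [Zsqrtd.re_mul, Zsqrtd.re_star, Zsqrtd.im_star]; ring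
  have him' : z.im * n.re - z.re * n.im = 0 := by
    rw [← him, Zsqrtd.im_mul, Zsqrtd.re_star, Zsqrtd.im_star]; ring
  have heq : z.im * a' = z.re * b' := by
    have h2 : G * (z.im * a') = G * (z.re * b') := by
      rw [show G * (z.im * a') = z.im * (G * a') by ring, ← ha,
        show G * (z.re * b') = z.re * (G * b') by ring, ← hb]
      linarith [him']
    exact mul_left_cancel₀ hGpos.ne' h2
  have hcop := coprime_red hn
  rw [← ha', ← hb'] at hcop
  obtain ⟨s, hs, him2⟩ : ∃ s, z.re = a' * s ∧ z.im = s * b' := by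
    rcases eq_or_ne a' 0 with h0 | h0
    · have hbu : IsUnit b' := by
        rw [h0] at hcop
        exact (isCoprime_zero_left).mp hcop
      have hb2 : b' * b' = 1 := by
        rcases Int.isUnit_iff.mp hbu with h | h <;> rw [h] <;> norm_num
      have hzre : z.re = 0 := by
        have h : z.re * b' = 0 := by rw [← heq, h0]; ring
        rcases mul_eq_zero.mp h with h | h
        · exact h
        · rw [h] at hb2; norm_num at hb2
      exact ⟨z.im * b', by rw [hzre, h0]; ring, by rw [mul_assoc, hb2]; ring⟩
    · obtain ⟨s, hs⟩ : a' ∣ z.re := hcop.dvd_of_dvd_mul_right ⟨z.im, by linarith [heq]⟩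
      refine ⟨s, hs, mul_left_cancel₀ h0 ?_⟩
      rw [show a' * z.im = z.im * a' by ring, heq, hs]; ring
  refine ⟨s, ?_⟩
  rw [hre, hs, him2, ha, hb, Dd, ← hG, ← ha', ← hb']
  ring

lemma gc_dvd_im_of_mem {n : GaussianInt} (u : GaussianInt) (hu : star n ∣ u) :
    gc n ∣ u.im := by
  obtain ⟨z, rfl⟩ := hu
  have h : (star n * z).im = z.im * n.re - z.re * n.im := by
    rw [Zsqrtd.im_mul, Zsqrtd.re_star, Zsqrtd.im_star]; ring
  rw [h]
  exact dvd_sub (Dvd.dvd.mul_left (gc_dvd_re n) _) (Dvd.dvd.mul_left (gc_dvd_im n) _)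

/-- base point: an ideal element with imaginary part exactly `gc n`. -/
def w0 (n : GaussianInt) : GaussianInt := star n * ⟨-(Int.gcdB n.re n.im), Int.gcdA n.re n.im⟩

lemma w0_mem (n : GaussianInt) : star n ∣ w0 n := Dvd.intro _ rfl

lemma w0_im (n : GaussianInt) : (w0 n).im = gc n := by
  rw [w0, Zsqrtd.im_mul, Zsqrtd.re_star, Zsqrtd.im_star, gc, Int.gcd_eq_gcd_ab]
  ring

lemma norm_I_pow (j : ℕ) : Zsqrtd.norm ((⟨0,1⟩ : GaussianInt) ^ j) = 1 := by
  induction j with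
  | zero => simp [Zsqrtd.norm_def]
  | succ i ih => rw [pow_succ, Zsqrtd.norm_mul, ih, one_mul]; simp [Zsqrtd.norm_def]

lemma gnorm_pos {n : GaussianInt} (hn : n ≠ 0) : 0 < gnorm n := by
  have := GaussianInt.norm_pos.mpr hn
  unfold gnorm; exact_mod_cast this

/-- the key per-element properties of `w = m * star n * i ^ j`. -/
lemma props {N v : ℝ} (hN : 0 < N) (hv : 0 < v) {n : GaussianInt} (hn : n ≠ 0)
    (hnN : gnorm n ≤ N) {m : GaussianInt} (hm : m ∈ sectorSet N v n)
    {k : ℤ} (hk : |garg m - garg n - k * (π / 2)| < v / N)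
    (j : ℕ) (hjk : (j : ℤ) = (-k) % 4) :
    star n ∣ (m * star n * (⟨0,1⟩ : GaussianInt) ^ j) ∧
      (m * star n * (⟨0,1⟩ : GaussianInt) ^ j).im ≠ 0 ∧
      |((m * star n * (⟨0,1⟩ : GaussianInt) ^ j).im : ℝ)| <
          v * Real.sqrt (gnorm n) / Real.sqrt N ∧
      (((m * star n * (⟨0,1⟩ : GaussianInt) ^ j).re : ℝ))^2 ≤ N * gnorm n := by
  obtain ⟨hm0, hmN, -, hnot⟩ := hm
  have hj : (j : ℤ) = -k - 4 * ((-k)/4) := by rw [hjk, Int.emod_def]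
  have hsin : Real.sin (garg m - garg n + j * (π/2)) =
      Real.sin (garg m - garg n - k * (π/2)) := by
    have hjr : (j : ℝ) = -(k : ℝ) - 4 * (((-k)/4 : ℤ) : ℝ) := by exact_mod_cast hj
    have h : garg m - garg n + j * (π/2) =
        (garg m - garg n - k * (π/2)) + (-((-k)/4) : ℤ) * (2 * π) := by
      rw [hjr]; push_cast; ring
    rw [h, Real.sin_add_int_mul_two_pi]
  have him := im_w_eq m n j
  rw [hsin] at him
  have hsm : 0 < Real.sqrt (gnorm m) := Real.sqrt_pos.mpr (gnorm_pos hm0)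
  have hsn : 0 < Real.sqrt (gnorm n) := Real.sqrt_pos.mpr (gnorm_pos hn)
  refine ⟨⟨m * (⟨0,1⟩ : GaussianInt) ^ j, by ring⟩, ?_, ?_, ?_⟩
  · -- im ≠ 0
    intro h0
    have hzero : (((m * star n * (⟨0,1⟩ : GaussianInt) ^ j).im : ℤ) : ℝ) = 0 := by
      rw [h0]; norm_num
    rw [him] at hzero
    have hs0 : Real.sin (garg m - garg n - k * (π/2)) = 0 := by
      rcases mul_eq_zero.mp hzero with h | h
      · rcases mul_eq_zero.mp h with h | h
        · exact absurd h hsm.ne'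
        · exact absurd h hsn.ne'
      · exact h
    obtain ⟨i, hi⟩ := Real.sin_eq_zero_iff.mp hs0
    exact hnot ⟨k + 2*i, by push_cast; linarith⟩
  · -- |im| < v √gn / √N
    rw [him, abs_mul, abs_mul, abs_of_nonneg hsm.le, abs_of_nonneg hsn.le]
    have h1 : |Real.sin (garg m - garg n - k * (π/2))| < v / N :=
      lt_of_le_of_lt (Real.abs_sin_le_abs) hk
    have h2 : Real.sqrt (gnorm m) ≤ Real.sqrt N := Real.sqrt_le_sqrt hmN
    calc Real.sqrt (gnorm m) * Real.sqrt (gnorm n) * |Real.sin _|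
        < Real.sqrt (gnorm m) * Real.sqrt (gnorm n) * (v / N) := by
          apply mul_lt_mul_of_pos_left h1 (by positivity)
      _ ≤ Real.sqrt N * Real.sqrt (gnorm n) * (v / N) := by
          apply mul_le_mul_of_nonneg_right (mul_le_mul_of_nonneg_right h2 hsn.le)
          positivity
      _ = v * Real.sqrt (gnorm n) / Real.sqrt N := by
          rw [eq_div_iff (Real.sqrt_ne_zero'.mpr hN)]
          field_simp
          linear_combination Real.mul_self_sqrt hN.le
  · -- re² ≤ N * gnorm n
    set w := m * star n * (⟨0,1⟩ : GaussianInt) ^ j with hw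
    have hnormw : Zsqrtd.norm w = Zsqrtd.norm m * Zsqrtd.norm n := by
      rw [hw, Zsqrtd.norm_mul, Zsqrtd.norm_mul, Zsqrtd.norm_conj]
      rw [norm_I_pow]; ring
    have h1 : (w.re : ℝ)^2 ≤ ((Zsqrtd.norm w : ℤ) : ℝ) := by
      have h : Zsqrtd.norm w = w.re * w.re + w.im * w.im := by
        rw [Zsqrtd.norm_def]; ring
      rw [h]
      push_cast
      nlinarith [sq_nonneg ((w.im : ℝ))]
    refine h1.trans ?_
    rw [hnormw]
    push_cast
    rw [show ((Zsqrtd.norm n : ℤ) : ℝ) = gnorm n from rfl,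
      show ((Zsqrtd.norm m : ℤ) : ℝ) = gnorm m from rfl]
    nlinarith [gnorm_pos hn, gnorm_pos hm0]

end SectorAux

set_option maxHeartbeats 2000000 in
open SectorAux in
/-- **Gaussian integers in narrow sectors** (Lemma 2.3). There is an absolute constant `C`
such that for any `N, v > 0` and nonzero `n ∈ ℤ[i]` with `N(n) ≤ N`, the number of nonzero
`m ∈ ℤ[i]` with `N(m) ≤ N` and `0 < |arg m − arg n| < v/N` (arguments modulo `π/2`) is at
most `C·v`. -/
theorem count_gaussian_in_sector :
    ∃ C : ℝ, 0 < C ∧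
    ∀ N v : ℝ, 0 < N → 0 < v → ∀ n : GaussianInt, n ≠ 0 → gnorm n ≤ N →
      (sectorSet N v n).Finite ∧ ((sectorSet N v n).ncard : ℝ) ≤ C * v := by
  classical
  refine ⟨56, by norm_num, ?_⟩
  intro N v hN hv n hn hnN
  set G : ℤ := gc n with hGdef
  have hG : 0 < G := gc_pos hn
  set D : ℤ := Dd n with hDdef
  have hD : 0 < D := Dd_pos hn
  have hgn : 0 < gnorm n := gnorm_pos hn
  set M : ℝ := v * Real.sqrt (gnorm n) / Real.sqrt N with hMdef
  have hM0 : 0 < M := by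
    apply div_pos (mul_pos hv (Real.sqrt_pos.mpr hgn)) (Real.sqrt_pos.mpr hN)
  set R : ℝ := Real.sqrt (N * gnorm n) with hRdef
  have hR0 : (0:ℝ) ≤ R := Real.sqrt_nonneg _
  set B : ℤ := ⌊M / (G:ℝ)⌋ with hBdef
  set J : ℤ := ⌈R / (D:ℝ)⌉ + 1 with hJdef
  have hB0 : 0 ≤ B := Int.floor_nonneg.mpr (by positivity)
  have hJ1 : 1 ≤ J := by
    have : (0:ℤ) ≤ ⌈R / (D:ℝ)⌉ := Int.ceil_nonneg (by positivity)
    omega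
  -- the bounding box
  set r : ℤ := ⌊Real.sqrt N⌋ with hrdef
  set box : Finset GaussianInt :=
    (Finset.Icc (-r) r ×ˢ Finset.Icc (-r) r).image (fun p => ⟨p.1, p.2⟩) with hboxdef
  have hbox : ∀ m : GaussianInt, gnorm m ≤ N → m ∈ box := by
    intro m hm
    have hnd : Zsqrtd.norm m = m.re * m.re + m.im * m.im := by rw [Zsqrtd.norm_def]; ring
    have hre2 : (m.re : ℝ)^2 ≤ N ∧ (m.im : ℝ)^2 ≤ N := by
      have h : ((m.re : ℝ)) * m.re + (m.im : ℝ) * m.im ≤ N := by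
        rw [show ((m.re : ℝ)) * m.re + (m.im : ℝ) * m.im
            = ((Zsqrtd.norm m : ℤ) : ℝ) by rw [hnd]; push_cast; ring]
        exact hm
      constructor <;> nlinarith [sq_nonneg ((m.re:ℝ)), sq_nonneg ((m.im:ℝ))]
    have habs : ∀ x : ℤ, ((x:ℝ)^2 ≤ N) → (-r ≤ x ∧ x ≤ r) := by
      intro x hx
      have h1 : |(x:ℝ)| ≤ Real.sqrt N := by
        rw [← Real.sqrt_sq_eq_abs]
        exact Real.sqrt_le_sqrt hx
      constructor
      · have : (-x : ℝ) ≤ Real.sqrt N := le_trans (neg_le_abs _) h1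
        have h2 : (-x : ℤ) ≤ r := Int.le_floor.mpr (by exact_mod_cast this)
        omega
      · exact Int.le_floor.mpr (le_trans (le_abs_self _) h1)
    obtain ⟨h1, h2⟩ := habs m.re hre2.1
    obtain ⟨h3, h4⟩ := habs m.im hre2.2
    refine Finset.mem_image.mpr ⟨(m.re, m.im), ?_, rfl⟩
    exact Finset.mem_product.mpr ⟨Finset.mem_Icc.mpr ⟨h1, h2⟩, Finset.mem_Icc.mpr ⟨h3, h4⟩⟩
  set s : Finset GaussianInt := box.filter (· ∈ sectorSet N v n) with hsdef
  have hsub : sectorSet N v n ⊆ ↑s := by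
    intro m hm
    exact Finset.mem_coe.mpr (Finset.mem_filter.mpr ⟨hbox m hm.2.1, hm⟩)
  have hfin : (sectorSet N v n).Finite := Set.Finite.subset s.finite_toSet hsub
  refine ⟨hfin, ?_⟩
  have hcard1 : (sectorSet N v n).ncard ≤ s.card := by
    rw [← Set.ncard_coe_finset]
    exact Set.ncard_le_ncard hsub s.finite_toSet
  -- the folding map f
  set kOf : GaussianInt → ℤ := fun m =>
    if h : ∃ k : ℤ, |garg m - garg n - k * (π/2)| < v / N then h.choose else 0 with hkOfdef
  set jOf : GaussianInt → ℕ := fun m => ((-(kOf m)) % 4).toNat with hjOfdef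
  set f : GaussianInt → GaussianInt :=
    fun m => m * star n * (⟨0,1⟩ : GaussianInt) ^ (jOf m) with hfdef
  have hjOfcast : ∀ m, ((jOf m : ℕ) : ℤ) = (-(kOf m)) % 4 := by
    intro m
    rw [hjOfdef]
    exact Int.toNat_of_nonneg (Int.emod_nonneg _ (by norm_num))
  have hmem : ∀ m ∈ s, m ∈ sectorSet N v n := fun m hm => (Finset.mem_filter.mp hm).2
  have hkey : ∀ m ∈ s, star n ∣ f m ∧ (f m).im ≠ 0 ∧ |((f m).im : ℝ)| < M ∧
      ((f m).re : ℝ)^2 ≤ N * gnorm n := by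
    intro m hm
    have hm' := hmem m hm
    have hex := hm'.2.2.1
    have hk : |garg m - garg n - (kOf m) * (π/2)| < v / N := by
      rw [hkOfdef]
      simp only [dif_pos hex]
      exact hex.choose_spec
    exact props hN hv hn hnN hm' hk (jOf m) (hjOfcast m)
  -- fiber bound : card s ≤ 4 * card image
  have hIne : ((⟨0,1⟩ : GaussianInt)) ≠ 0 := by
    intro h
    have := congrArg Zsqrtd.im h
    simp at this
  have hsne : (star n : GaussianInt) ≠ 0 := by
    intro h
    exact hn (by simpa using congrArg star h)
  have hfiber : s.card ≤ 4 * (s.image f).card := by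
    apply Finset.card_le_mul_card_image
    intro c _
    have h4 : (Finset.filter (fun m => f m = c) s).card ≤ (Finset.range 4).card := by
      apply Finset.card_le_card_of_injOn (fun m => jOf m)
      · intro m _
        simp only [Finset.mem_coe, Finset.mem_range]
        have h1 := hjOfcast m
        have h2 : (-(kOf m)) % 4 < 4 := Int.emod_lt_of_pos _ (by norm_num)
        omega
      · intro m₁ h₁ m₂ h₂ hj
        simp only [Finset.coe_filter, Set.mem_setOf_eq] at h₁ h₂
        have heq : f m₁ = f m₂ := h₁.2.trans h₂.2.symm
        rw [hfdef] at heq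
        simp only at heq
        rw [show jOf m₁ = jOf m₂ from hj] at heq
        have hXne : ((⟨0,1⟩:GaussianInt) ^ (jOf m₂)) ≠ 0 := pow_ne_zero _ hIne
        exact mul_right_cancel₀ hsne (mul_right_cancel₀ hXne heq)
    simpa using h4
  -- the injection ψ on the image
  set t' : GaussianInt → ℤ := fun w => w.im / G with ht'def
  set rf : ℤ → ℤ := fun t => (t * (w0 n).re) % D with hrfdef
  set ψ : GaussianInt → ℤ × ℤ := fun w => (t' w, (w.re - rf (t' w)) / D) with hψdef
  set T : Finset (ℤ × ℤ) := ((Finset.Icc (-B) B).erase 0) ×ˢ (Finset.Icc (-J) J) with hTdef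
  have hdiv : ∀ w : GaussianInt, star n ∣ w →
      w.im = G * t' w ∧ D ∣ (w.re - rf (t' w)) := by
    intro w hw
    have h1 : G ∣ w.im := gc_dvd_im_of_mem w hw
    have h2 : w.im = G * t' w := (Int.mul_ediv_cancel' h1).symm
    refine ⟨h2, ?_⟩
    have hu : star n ∣ (w - (t' w : GaussianInt) * w0 n) :=
      dvd_sub hw ((w0_mem n).mul_left _)
    have huim : (w - (t' w : GaussianInt) * w0 n).im = 0 := by
      rw [Zsqrtd.im_sub, Zsqrtd.im_mul, Zsqrtd.re_intCast, Zsqrtd.im_intCast, w0_im]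
      rw [← hGdef, h2]
      ring
    have h3 := dvd_re_of_im_eq_zero hn hu huim
    have h4 : (w - (t' w : GaussianInt) * w0 n).re = w.re - t' w * (w0 n).re := by
      rw [Zsqrtd.re_sub, Zsqrtd.re_mul, Zsqrtd.re_intCast, Zsqrtd.im_intCast]; ring
    rw [h4, ← hDdef] at h3
    have h5 : D ∣ (t' w * (w0 n).re - rf (t' w)) :=
      Int.dvd_self_sub_of_emod_eq rfl
    have h6 := dvd_add h3 h5
    rw [show w.re - t' w * (w0 n).re + (t' w * (w0 n).re - rf (t' w))
        = w.re - rf (t' w) by ring] at h6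
    exact h6
  have himg : ∀ w ∈ s.image f, star n ∣ w ∧ w.im ≠ 0 ∧ |(w.im:ℝ)| < M ∧
      ((w.re:ℝ))^2 ≤ N * gnorm n := by
    intro w hw
    obtain ⟨m, hm, rfl⟩ := Finset.mem_image.mp hw
    exact hkey m hm
  have hmaps : ∀ w ∈ s.image f, ψ w ∈ T := by
    intro w hw
    obtain ⟨hwdvd, hwim, hwimM, hwre⟩ := himg w hw
    obtain ⟨him_eq, hre_dvd⟩ := hdiv w hwdvd
    have ht'ne : t' w ≠ 0 := by
      intro h
      rw [h, mul_zero] at him_eq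
      exact hwim him_eq
    -- |t'| bounds
    have habs_t : |(t' w : ℝ)| < M / (G:ℝ) := by
      rw [lt_div_iff₀ (by exact_mod_cast hG)]
      have h1 : |(w.im : ℝ)| = |(t' w : ℝ)| * (G:ℝ) := by
        rw [him_eq]
        push_cast
        rw [abs_mul, abs_of_pos (show (0:ℝ) < (G:ℝ) by exact_mod_cast hG)]
        ring
      linarith [hwimM, h1.symm.le]
    have htB : -B ≤ t' w ∧ t' w ≤ B := by
      constructor
      · have h1 : (-(t' w) : ℝ) ≤ M / (G:ℝ) := le_trans (neg_le_abs _) habs_t.le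
        have h2 : (-(t' w) : ℤ) ≤ B := Int.le_floor.mpr (by exact_mod_cast h1)
        omega
      · exact Int.le_floor.mpr (le_trans (le_abs_self _) habs_t.le)
    -- jj bounds
    set jj : ℤ := (w.re - rf (t' w)) / D with hjjdef
    have hjjD : D * jj = w.re - rf (t' w) := Int.mul_ediv_cancel' hre_dvd
    have hrf0 : 0 ≤ rf (t' w) := Int.emod_nonneg _ hD.ne'
    have hrfD : rf (t' w) < D := Int.emod_lt_of_pos _ hD
    have hwreR : |(w.re : ℝ)| ≤ R := by
      rw [← Real.sqrt_sq_eq_abs, hRdef]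
      exact Real.sqrt_le_sqrt hwre
    have hDR : (0:ℝ) < (D:ℝ) := by exact_mod_cast hD
    have hjjub : jj ≤ J := by
      have h1 : (D:ℝ) * (jj:ℝ) ≤ R := by
        have : ((D * jj : ℤ) : ℝ) = (w.re : ℝ) - (rf (t' w) : ℝ) := by
          rw [hjjD]; push_cast; ring
        push_cast at this
        have h2 : (rf (t' w) : ℝ) ≥ 0 := by exact_mod_cast hrf0
        have h3 : (w.re : ℝ) ≤ R := le_trans (le_abs_self _) hwreR
        linarith
      have h4 : (jj : ℝ) ≤ R / (D:ℝ) := by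
        rw [le_div_iff₀ hDR]; linarith [h1]
      have h5 : (jj : ℝ) ≤ (⌈R / (D:ℝ)⌉ : ℝ) := le_trans h4 (Int.le_ceil _)
      have h6 : jj ≤ ⌈R / (D:ℝ)⌉ := by exact_mod_cast h5
      omega
    have hjjlb : -J ≤ jj := by
      have h1 : -R - (D:ℝ) ≤ (D:ℝ) * (jj:ℝ) := by
        have heq2 : ((D * jj : ℤ) : ℝ) = (w.re : ℝ) - (rf (t' w) : ℝ) := by
          rw [hjjD]; push_cast; ring
        push_cast at heq2
        have h2 : (rf (t' w) : ℝ) ≤ (D:ℝ) := by exact_mod_cast hrfD.le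
        have h3 : -R ≤ (w.re : ℝ) := by
          have := neg_le_abs ((w.re : ℝ))
          linarith [hwreR]
        linarith
      have h4' : (-R - (D:ℝ))/(D:ℝ) ≤ (jj:ℝ) := by
        rw [div_le_iff₀ hDR]
        nlinarith [h1]
      have h4 : -(R / (D:ℝ)) - 1 ≤ (jj : ℝ) := by
        have heqd : -(R / (D:ℝ)) - 1 = (-R - (D:ℝ))/(D:ℝ) := by field_simp
        rw [heqd]; exact h4'
      have h5 : (-(J:ℤ) : ℝ) ≤ (jj:ℝ) := by
        have h6 : (R / (D:ℝ)) ≤ (⌈R / (D:ℝ)⌉ : ℝ) := Int.le_ceil _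
        have : (-(J:ℤ) : ℝ) = -(⌈R / (D:ℝ)⌉ : ℝ) - 1 := by
          rw [hJdef]; push_cast; ring
        rw [this]
        linarith
      exact_mod_cast h5
    rw [hTdef]
    refine Finset.mem_product.mpr ⟨?_, ?_⟩
    · exact Finset.mem_erase.mpr ⟨ht'ne, Finset.mem_Icc.mpr ⟨htB.1, htB.2⟩⟩
    · exact Finset.mem_Icc.mpr ⟨hjjlb, hjjub⟩
  have hinj : Set.InjOn ψ ↑(s.image f) := by
    intro w₁ hw₁ w₂ hw₂ hψeq
    have hd₁ := hdiv w₁ (himg w₁ (by exact_mod_cast hw₁)).1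
    have hd₂ := hdiv w₂ (himg w₂ (by exact_mod_cast hw₂)).1
    have ht : t' w₁ = t' w₂ := congrArg Prod.fst hψeq
    have hjj : (w₁.re - rf (t' w₁)) / D = (w₂.re - rf (t' w₂)) / D :=
      congrArg Prod.snd hψeq
    have him : w₁.im = w₂.im := by rw [hd₁.1, hd₂.1, ht]
    have hre : w₁.re = w₂.re := by
      have e₁ : D * ((w₁.re - rf (t' w₁)) / D) = w₁.re - rf (t' w₁) :=
        Int.mul_ediv_cancel' hd₁.2
      have e₂ : D * ((w₂.re - rf (t' w₂)) / D) = w₂.re - rf (t' w₂) :=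
        Int.mul_ediv_cancel' hd₂.2
      rw [hjj] at e₁
      rw [ht] at e₁
      omega
    exact Zsqrtd.ext_iff.mpr ⟨hre, him⟩
  have hcard2 : (s.image f).card ≤ T.card :=
    Finset.card_le_card_of_injOn ψ hmaps hinj
  -- cardinality of T
  have hTcard : (T.card : ℝ) ≤ 14 * v := by
    have h0mem : (0:ℤ) ∈ Finset.Icc (-B) B := Finset.mem_Icc.mpr ⟨by omega, hB0⟩
    have hcard_erase : ((Finset.Icc (-B) B).erase 0).card = (2*B).toNat := by
      rw [Finset.card_erase_of_mem h0mem, Int.card_Icc]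
      omega
    have hcardJ : (Finset.Icc (-J) J).card = (2*J+1).toNat := by
      rw [Int.card_Icc]; omega
    have hTc : T.card = (2*B).toNat * (2*J+1).toNat := by
      rw [hTdef, Finset.card_product, hcard_erase, hcardJ]
    -- real bounds
    have hBr : ((2*B).toNat : ℝ) ≤ 2 * (M / (G:ℝ)) := by
      have h1 : ((2*B).toNat : ℤ) = 2*B := Int.toNat_of_nonneg (by omega)
      have h2 : (B : ℝ) ≤ M / (G:ℝ) := Int.floor_le _
      have h3 : (((2*B).toNat : ℤ) : ℝ) = 2 * (B:ℝ) := by rw [h1]; push_cast; ring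
      rw [show (((2*B).toNat : ℕ) : ℝ) = (((2*B).toNat : ℤ) : ℝ) by push_cast; ring, h3]
      linarith
    have hJr : ((2*J+1).toNat : ℝ) ≤ 2 * (R / (D:ℝ)) + 5 := by
      have h1 : ((2*J+1).toNat : ℤ) = 2*J+1 := Int.toNat_of_nonneg (by omega)
      have h2 : (⌈R / (D:ℝ)⌉ : ℝ) < R / (D:ℝ) + 1 := Int.ceil_lt_add_one _
      have h3 : (J : ℝ) < R / (D:ℝ) + 2 := by
        rw [hJdef]; push_cast; linarith
      rw [show (((2*J+1).toNat : ℕ) : ℝ) = (((2*J+1).toNat : ℤ) : ℝ) by push_cast; ring, h1]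
      push_cast
      linarith
    have hprod : (T.card : ℝ) ≤ (2 * (M / (G:ℝ))) * (2 * (R / (D:ℝ)) + 5) := by
      rw [hTc]
      push_cast
      apply mul_le_mul hBr hJr (by positivity) (by positivity)
    refine hprod.trans ?_
    -- arithmetic : (2 M/G)(2 R/D + 5) = 4 (MR)/(GD) + 10 M/G ≤ 4v + 10v
    have hGD : ((G:ℝ)) * ((D:ℝ)) = gnorm n := by
      have := gc_mul_Dd hn
      rw [← hGdef, ← hDdef] at this
      have h2 : (((G * D : ℤ)) : ℝ) = ((Zsqrtd.norm n : ℤ) : ℝ) := by exact_mod_cast this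
      push_cast at h2
      exact h2
    have hMR : M * R = v * gnorm n := by
      rw [hMdef, hRdef, Real.sqrt_mul hN.le]
      field_simp
      linear_combination Real.mul_self_sqrt hgn.le
    have hGr : (1:ℝ) ≤ (G:ℝ) := by exact_mod_cast hG
    have hDr : (0:ℝ) < (D:ℝ) := by exact_mod_cast hD
    have hxy : (M / (G:ℝ)) * (R / (D:ℝ)) = v := by
      rw [div_mul_div_comm, hMR, hGD, mul_div_assoc, div_self hgn.ne', mul_one]
    have hMG_le : M / (G:ℝ) ≤ v := by
      have h1 : M / (G:ℝ) ≤ M := div_le_self hM0.le hGr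
      have h2 : M ≤ v := by
        rw [hMdef, div_le_iff₀ (Real.sqrt_pos.mpr hN)]
        have h3 := Real.sqrt_le_sqrt hnN
        nlinarith [hv.le, Real.sqrt_nonneg (gnorm n)]
      linarith
    have hRD0 : (0:ℝ) ≤ R / (D:ℝ) := by positivity
    have hMG0 : (0:ℝ) ≤ M / (G:ℝ) := by positivity
    nlinarith [hxy, hMG_le, hRD0, hMG0]
  have c1 : ((sectorSet N v n).ncard : ℝ) ≤ (s.card : ℝ) := by exact_mod_cast hcard1
  have c2 : (s.card : ℝ) ≤ 4 * ((s.image f).card : ℝ) := by exact_mod_cast hfiber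
  have c3 : ((s.image f).card : ℝ) ≤ (T.card : ℝ) := by exact_mod_cast hcard2
  linarith [hTcard]
end
end

section
/- Let n ≥ 1 be an integer and let y > 0 be real. Then for every real x ≠ 0, the n-th derivative of the function x ↦ arctan(y/x) satisfies (d/dx)ⁿ arctan(y/x) = (−1)ⁿ · (n−1)! / (x²+y²)ⁿ · Im((x+iy)ⁿ). -/
open scoped Real

noncomputable section

private lemma hasDerivAt_im' {f : ℝ → ℂ} {f' : ℂ} {x : ℝ} (h : HasDerivAt f f' x) :
    HasDerivAt (fun t => (f t).im) f'.im x := by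
  exact (Complex.imCLM.hasFDerivAt.comp_hasDerivAt x h)

private lemma key_identity (x y : ℝ) (m : ℕ) :
    Complex.im (((x:ℂ) + y * Complex.I) ^ m) * (x ^ 2 + y ^ 2)
      - 2 * x * Complex.im (((x:ℂ) + y * Complex.I) ^ (m + 1))
      = - Complex.im (((x:ℂ) + y * Complex.I) ^ (m + 2)) := by
  simp only [pow_succ, Complex.mul_im, Complex.mul_re, Complex.add_re, Complex.add_im,
    Complex.ofReal_re, Complex.ofReal_im, Complex.mul_re, Complex.mul_im,
    Complex.I_re, Complex.I_im]
  ring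

private lemma hasDerivAt_g (y : ℝ) (hy : 0 < y) (m : ℕ) (x : ℝ) :
    HasDerivAt
      (fun t : ℝ => Complex.im (((t:ℂ) + y * Complex.I) ^ (m+1)) / (t ^ 2 + y ^ 2) ^ (m+1))
      (-((m:ℝ)+1) * Complex.im (((x:ℂ) + y * Complex.I) ^ (m+2)) / (x ^ 2 + y ^ 2) ^ (m+2)) x := by
  have hD : (0:ℝ) < x ^ 2 + y ^ 2 := by positivity
  have hnum : HasDerivAt (fun t : ℝ => Complex.im (((t:ℂ) + y * Complex.I) ^ (m+1)))
      (((m:ℂ)+1) * ((x:ℂ) + y * Complex.I) ^ m).im x := by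
    apply hasDerivAt_im'
    have := (((hasDerivAt_id ((x:ℝ):ℂ)).add_const ((y:ℂ) * Complex.I)).pow (m+1)).comp_ofReal
    simpa using this
  have hden : HasDerivAt (fun t : ℝ => (t ^ 2 + y ^ 2) ^ (m+1))
      (((m:ℝ)+1) * (x ^ 2 + y ^ 2) ^ m * (2 * x)) x := by
    have := (((hasDerivAt_id x).pow 2).add_const (y ^ 2)).pow (m+1)
    simpa [mul_comm, mul_assoc, mul_left_comm, Pi.pow_def] using this
  have : HasDerivAt (fun t : ℝ => Complex.im (((t:ℂ) + y * Complex.I) ^ (m+1)) / (t ^ 2 + y ^ 2) ^ (m+1)) _ x :=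
    hnum.div hden (by positivity)
  convert this using 1
  have him : (((m:ℂ)+1) * ((x:ℂ) + y * Complex.I) ^ m).im
      = ((m:ℝ)+1) * Complex.im (((x:ℂ) + y * Complex.I) ^ m) := by
    simp [Complex.mul_im]
  rw [him]
  have hkey := key_identity x y m
  set a := Complex.im (((x:ℂ) + y * Complex.I) ^ m)
  set b := Complex.im (((x:ℂ) + y * Complex.I) ^ (m+1))
  set c := Complex.im (((x:ℂ) + y * Complex.I) ^ (m+2))
  have hc : c = -(a * (x ^ 2 + y ^ 2) - 2 * x * b) := by linarith
  rw [hc]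
  field_simp
  ring

/-- **Derivatives of arctan(y/x)** (Lemma 4.5). For `n ≥ 1`, `y > 0` and `x ≠ 0`,
`(d/dx)ⁿ arctan(y/x) = (−1)ⁿ (n−1)!/(x²+y²)ⁿ · Im((x+iy)ⁿ)`. -/
theorem iteratedDeriv_arctan_div :
    ∀ n : ℕ, 1 ≤ n → ∀ y : ℝ, 0 < y → ∀ x : ℝ, x ≠ 0 →
      iteratedDeriv n (fun t : ℝ => Real.arctan (y / t)) x
        = (-1 : ℝ) ^ n * (Nat.factorial (n - 1) : ℝ) / (x ^ 2 + y ^ 2) ^ n *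
            Complex.im (((x : ℂ) + (y : ℂ) * Complex.I) ^ n) := by
  intro n
  induction n with
  | zero => omega
  | succ m ih =>
    intro _ y hy x hx
    have hD : (0:ℝ) < x ^ 2 + y ^ 2 := by positivity
    rcases Nat.eq_zero_or_pos m with hm | hm
    · subst hm
      rw [iteratedDeriv_one]
      have h1 : HasDerivAt (fun t : ℝ => y / t) (-(y / x ^ 2)) x := by
        have := (hasDerivAt_const x y).div (hasDerivAt_id x) hx
        simpa [sq, neg_div, Pi.div_def] using this
      have h2 : HasDerivAt (fun t : ℝ => Real.arctan (y / t))
          (1 / (1 + (y / x) ^ 2) * -(y / x ^ 2)) x := by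
        simpa [Function.comp_def] using (Real.hasDerivAt_arctan (y / x)).comp x h1
      rw [h2.deriv]
      have hx2 : (x:ℝ) ^ 2 ≠ 0 := pow_ne_zero 2 hx
      norm_num
      field_simp
    · -- m ≥ 1
      obtain ⟨k, rfl⟩ : ∃ k, m = k + 1 := ⟨m - 1, by omega⟩
      rw [iteratedDeriv_succ]
      have hev : iteratedDeriv (k+1) (fun t : ℝ => Real.arctan (y / t)) =ᶠ[nhds x]
          (fun t : ℝ => (-1 : ℝ) ^ (k+1) * (Nat.factorial k : ℝ) / (t ^ 2 + y ^ 2) ^ (k+1) *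
            Complex.im (((t : ℂ) + (y : ℂ) * Complex.I) ^ (k+1))) := by
        refine Filter.eventuallyEq_of_mem (isOpen_compl_singleton.mem_nhds hx) ?_
        intro t ht
        simpa using ih (by omega) y hy t ht
      rw [hev.deriv_eq]
      have hg := ((hasDerivAt_g y hy k x).const_mul
        ((-1 : ℝ) ^ (k+1) * (Nat.factorial k : ℝ))).deriv
      have heq : (fun t : ℝ => (-1 : ℝ) ^ (k+1) * (Nat.factorial k : ℝ) / (t ^ 2 + y ^ 2) ^ (k+1) *
            Complex.im (((t : ℂ) + (y : ℂ) * Complex.I) ^ (k+1)))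
          = fun t : ℝ => (-1 : ℝ) ^ (k+1) * (Nat.factorial k : ℝ) *
            (Complex.im (((t:ℂ) + y * Complex.I) ^ (k+1)) / (t ^ 2 + y ^ 2) ^ (k+1)) := by
        funext t; ring
      rw [heq, hg]
      have hfac : (Nat.factorial (k+1) : ℝ) = ((k:ℝ)+1) * (Nat.factorial k : ℝ) := by
        rw [Nat.factorial_succ]; push_cast; ring
      simp only [Nat.add_sub_cancel, hfac]
      field_simp
      ring
end
end
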